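/- Let K be a standard bilinear Calderón–Zygmund kernel on ℝⁿ with exponent α ∈ (0,1], let φ ∈ 𝒜 and 0 < ε₁ < ε₂. Then ‖T^φ_{ε₁,ε₂}‖_WBP ≤ C(n) (‖K‖_{CZ_α} + ‖T_{ε₁}‖_WBP + ‖T_{ε₂}‖_WBP), where C(n) depends only on n. -/

import Mathlib

open MeasureTheory Set
open scoped ENNReal NNReal Classical

noncomputable section

namespace Bilinear

/-- Points of `ℝⁿ`, equipped with the `ℓ^∞` (sup) metric. -/
abbrev E (n : ℕ) : Type := Fin n → ℝ

/-- An axis-parallel cube in `ℝⁿ`, described by its lower corner and its side length. -/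
structure Cube (n : ℕ) where
  corner : Fin n → ℝ
  side : ℝ
  side_pos : 0 < side

namespace Cube

variable {n : ℕ}

/-- The (half-open) cube as a subset of `ℝⁿ`. -/
def set (Q : Cube n) : Set (E n) :=
  {x | ∀ i, Q.corner i ≤ x i ∧ x i < Q.corner i + Q.side}

/-- The closed cube as a subset of `ℝⁿ`. -/
def clSet (Q : Cube n) : Set (E n) :=
  {x | ∀ i, Q.corner i ≤ x i ∧ x i ≤ Q.corner i + Q.side}

/-- The volume `|Q| = ℓ(Q)ⁿ` of a cube. -/
def vol (Q : Cube n) : ℝ := Q.side ^ n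

/-- The center of a cube. -/
def center (Q : Cube n) : E n := fun i => Q.corner i + Q.side / 2

/-- The concentric dilate `cQ` of a cube (defined for `c ≥ 1`; junk otherwise). -/
def dilate (Q : Cube n) (c : ℝ) : Cube n where
  corner := fun i => Q.corner i + Q.side / 2 - max c 1 * Q.side / 2
  side := max c 1 * Q.side
  side_pos := mul_pos (lt_of_lt_of_le one_pos (le_max_right c 1)) Q.side_pos

end Cube

/-- The (`ℓ^∞`) distance between two sets of `ℝⁿ`. -/
def setDist {n : ℕ} (s t : Set (E n)) : ℝ := sInf (Set.image2 dist s t)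

/-- The (`ℓ^∞`) distance between two cubes. -/
def cubeDist {n : ℕ} (Q R : Cube n) : ℝ := setDist Q.clSet R.clSet

/-- The indicator function `1_Q` of a cube, as a complex-valued function. -/
def indC {n : ℕ} (Q : Cube n) : E n → ℂ := fun x => if x ∈ Q.set then 1 else 0

/-- The average `⟨|f|⟩_Q` of `|f|` over a cube. -/
def avgAbs {n : ℕ} (Q : Cube n) (f : E n → ℂ) : ℝ := Q.vol⁻¹ * ∫ x in Q.set, ‖f x‖

/-- The average `⟨f⟩_Q` of `f` over a cube. -/
def avg {n : ℕ} (Q : Cube n) (f : E n → ℂ) : ℂ := (Q.vol : ℂ)⁻¹ * ∫ x in Q.set, f x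

/-- The `L^p` norm (`p` a real exponent) of `f : ℝⁿ → ℂ`. -/
def lpNorm {n : ℕ} (f : E n → ℂ) (p : ℝ) : ℝ := (eLpNorm f (ENNReal.ofReal p) volume).toReal

/-- `f` is bounded, measurable and compactly supported. -/
def BddCompactSupp {n : ℕ} (f : E n → ℂ) : Prop :=
  Measurable f ∧ HasCompactSupport f ∧ ∃ M : ℝ, ∀ x, ‖f x‖ ≤ M

/-- The pairing `⟨f, g⟩ = ∫ f g`. -/
def pairing {n : ℕ} (f g : E n → ℂ) : ℂ := ∫ x, f x * g x

/-! ### Random dyadic grids -/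

/-- The translation `Σ_{j : 2^{-j} < 2^{-k}} 2^{-j} ω^j` of the grid of scale `2^{-k}`. -/
def gridShift {n : ℕ} (ω : ℤ → Fin n → Bool) (k : ℤ) (i : Fin n) : ℝ :=
  ∑' j : {j : ℤ // k < j}, (2 : ℝ) ^ (-(j.1)) * (if ω j.1 i then 1 else 0)

/-- The shifted dyadic grid `𝒟_ω = {I + ω : I ∈ 𝒟₀}`. -/
def dyadicGrid {n : ℕ} (ω : ℤ → Fin n → Bool) : Set (Cube n) :=
  {Q | ∃ (k : ℤ) (m : Fin n → ℤ), Q.side = (2 : ℝ) ^ (-k) ∧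
    ∀ i, Q.corner i = (m i : ℝ) * (2 : ℝ) ^ (-k) + gridShift ω k i}

/-- A dyadic grid is a translate-type grid `𝒟_ω` of the standard grid. -/
def IsDyadicGrid {n : ℕ} (𝒟 : Set (Cube n)) : Prop := ∃ ω, 𝒟 = dyadicGrid ω

/-- A grid has no quadrants if every strictly increasing chain of cubes exhausts `ℝⁿ`;
equivalently, every cube of the grid and every point are contained in a common bigger
grid cube. -/
def NoQuadrants {n : ℕ} (𝒟 : Set (Cube n)) : Prop :=
  ∀ Q ∈ 𝒟, ∀ x : E n, ∃ R ∈ 𝒟, Q.set ⊆ R.set ∧ x ∈ R.set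

/-- A cube `I` of a grid `𝒟` is good (with parameters `r, γ`) if for every `J ∈ 𝒟` with
`ℓ(J) ≥ 2^r ℓ(I)` one has `d(I, ∂J) > ℓ(I)^γ ℓ(J)^(1-γ)`. -/
def IsGood {n : ℕ} (𝒟 : Set (Cube n)) (r : ℕ) (γ : ℝ) (I : Cube n) : Prop :=
  ∀ J ∈ 𝒟, (2 : ℝ) ^ r * I.side ≤ J.side →
    I.side ^ γ * J.side ^ (1 - γ) < setDist I.clSet (frontier J.set)

/-! ### Haar functions -/

/-- One-dimensional Haar functions on the interval `[a, a+l)`: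
noncancellative (`e = false`) and cancellative (`e = true`). -/
def haar1 (a l : ℝ) (e : Bool) (t : ℝ) : ℝ :=
  if a ≤ t ∧ t < a + l then
    if e then (if t < a + l / 2 then l ^ (-(1 : ℝ) / 2) else -(l ^ (-(1 : ℝ) / 2)))
    else l ^ (-(1 : ℝ) / 2)
  else 0

/-- The Haar function `h_Q^η` of a cube `Q ⊂ ℝⁿ`. It is cancellative iff `η ≠ 0`. -/
def haar {n : ℕ} (Q : Cube n) (η : Fin n → Bool) : E n → ℝ :=
  fun x => ∏ i, haar1 (Q.corner i) Q.side (η i) (x i)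

/-- The pairing `⟨f, h_Q^η⟩`. -/
def haarPairing {n : ℕ} (f : E n → ℂ) (Q : Cube n) (η : Fin n → Bool) : ℂ :=
  ∫ x, f x * (haar Q η x : ℂ)

/-! ### Bilinear Calderón–Zygmund kernels and truncated operators -/


/-- `K` is a (measurable) standard bilinear Calderón–Zygmund kernel on `ℝⁿ` with Hölder
exponent `α` and constant `C`: size bound and Hölder bounds in each of the three
variables, away from the diagonal `Δ = {x = y = z}`. -/
def CZBounds (n : ℕ) (α : ℝ) (K : E n → E n → E n → ℂ) (C : ℝ) : Prop :=
  Measurable (fun p : E n × E n × E n => K p.1 p.2.1 p.2.2) ∧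
  (∀ x y z : E n, ¬(x = y ∧ y = z) →
    ‖K x y z‖ ≤ C / (dist x y + dist x z) ^ (2 * n)) ∧
  (∀ x x' y z : E n, ¬(x = y ∧ y = z) → ¬(x' = y ∧ y = z) →
    dist x x' ≤ max (dist x y) (dist x z) / 2 →
    ‖K x y z - K x' y z‖ ≤ C * dist x x' ^ α / (dist x y + dist x z) ^ (2 * (n : ℝ) + α)) ∧
  (∀ x y y' z : E n, ¬(x = y ∧ y = z) → ¬(x = y' ∧ y' = z) →
    dist y y' ≤ max (dist x y) (dist x z) / 2 →
    ‖K x y z - K x y' z‖ ≤ C * dist y y' ^ α / (dist x y + dist x z) ^ (2 * (n : ℝ) + α)) ∧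
  (∀ x y z z' : E n, ¬(x = y ∧ y = z) → ¬(x = y ∧ y = z') →
    dist z z' ≤ max (dist x y) (dist x z) / 2 →
    ‖K x y z - K x y z'‖ ≤ C * dist z z' ^ α / (dist x y + dist x z) ^ (2 * (n : ℝ) + α))

/-- The truncated bilinear singular integral
`T_ε(f,g)(x) = ∬_{max(|x-y|,|x-z|) > ε} K(x,y,z) f(y) g(z) dy dz`. -/
def truncT {n : ℕ} (K : E n → E n → E n → ℂ) (ε : ℝ) (f g : E n → ℂ) (x : E n) : ℂ :=
  ∫ y, ∫ z, if ε < max (dist x y) (dist x z) then K x y z * f y * g z else 0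

/-- The class `𝒜` of smooth truncation profiles: smooth `φ` with values in `[0,1]`,
vanishing on `[0,1/2]`, equal to `1` on `[1,∞)`, and `‖φ'‖_∞ ≤ 10`. -/
def memA (φ : ℝ → ℝ) : Prop :=
  ContDiff ℝ (⊤ : ℕ∞) φ ∧ (∀ t, φ t ∈ Set.Icc (0 : ℝ) 1) ∧
    (∀ t ≤ (1 : ℝ) / 2, φ t = 0) ∧ (∀ t, (1 : ℝ) ≤ t → φ t = 1) ∧ ∀ t, |deriv φ t| ≤ 10

/-- The smoothly truncated kernel `K_ε^φ(x,y,z) = K(x,y,z) φ((|x-y|+|x-z|)/ε)`. -/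
def smoothK {n : ℕ} (K : E n → E n → E n → ℂ) (φ : ℝ → ℝ) (ε : ℝ) :
    E n → E n → E n → ℂ :=
  fun x y z => K x y z * ((φ ((dist x y + dist x z) / ε) : ℝ) : ℂ)

/-- The smoothly truncated operator `T_ε^φ(f,g)(x) = ∬ K_ε^φ(x,y,z) f(y) g(z) dy dz`. -/
def smoothT {n : ℕ} (K : E n → E n → E n → ℂ) (φ : ℝ → ℝ) (ε : ℝ) (f g : E n → ℂ)
    (x : E n) : ℂ :=
  ∫ y, ∫ z, smoothK K φ ε x y z * f y * g z

/-- The first adjoint kernel, `K^{1*}(x,y,z) = K(y,x,z)`. -/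
def adj1 {n : ℕ} (K : E n → E n → E n → ℂ) : E n → E n → E n → ℂ := fun x y z => K y x z

/-- The second adjoint kernel, `K^{2*}(x,y,z) = K(z,y,x)`. -/
def adj2 {n : ℕ} (K : E n → E n → E n → ℂ) : E n → E n → E n → ℂ := fun x y z => K z y x

/-- `C` is a weak boundedness constant of the bilinear operator `T`:
`|⟨T(1_I,1_I), 1_I⟩| ≤ C |I|` for all cubes `I ⊂ ℝⁿ`. -/
def WBPBound {n : ℕ} (T : (E n → ℂ) → (E n → ℂ) → E n → ℂ) (C : ℝ) : Prop :=
  ∀ Q : Cube n, ‖∫ x in Q.set, T (indC Q) (indC Q) x‖ ≤ C * Q.vol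

/-! ### The `BMO` pairings `⟨T_ε(1,1), φ₀⟩` and testing conditions -/

/-- The pairing `⟨T_ε(1,1), φ₀⟩`, defined (for `φ₀` supported in the cube `R`, with mean
zero, and `c ≥ 3` a dilation factor) as
`⟨T_ε(1_{cR},1_{cR}), φ₀⟩ + ∭ (K(x,y,z) - K(c_R,y,z)) 1_{(cR×cR)ᶜ}(y,z) φ₀(x) dy dz dx`. -/
def bmoPairing {n : ℕ} (K : E n → E n → E n → ℂ) (ε : ℝ) (φ₀ : E n → ℂ) (R : Cube n)
    (c : ℝ) : ℂ :=
  (∫ x, truncT K ε (indC (R.dilate c)) (indC (R.dilate c)) x * φ₀ x) +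
    ∫ x, φ₀ x * ∫ y, ∫ z,
      if y ∈ (R.dilate c).set ∧ z ∈ (R.dilate c).set then 0
      else K x y z - K R.center y z

/-- The pairing `⟨T_ε^{1*}(1,1), φ₀⟩ = ⟨T_ε(φ₀, 1_{cR}), 1_{cR}⟩ + (correction with K^{1*})`. -/
def bmoPairing1 {n : ℕ} (K : E n → E n → E n → ℂ) (ε : ℝ) (φ₀ : E n → ℂ) (R : Cube n)
    (c : ℝ) : ℂ :=
  (∫ x, truncT K ε φ₀ (indC (R.dilate c)) x * indC (R.dilate c) x) +
    ∫ x, φ₀ x * ∫ y, ∫ z,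
      if y ∈ (R.dilate c).set ∧ z ∈ (R.dilate c).set then 0
      else adj1 K x y z - adj1 K R.center y z

/-- The pairing `⟨T_ε^{2*}(1,1), φ₀⟩ = ⟨T_ε(1_{cR}, φ₀), 1_{cR}⟩ + (correction with K^{2*})`. -/
def bmoPairing2 {n : ℕ} (K : E n → E n → E n → ℂ) (ε : ℝ) (φ₀ : E n → ℂ) (R : Cube n)
    (c : ℝ) : ℂ :=
  (∫ x, truncT K ε (indC (R.dilate c)) φ₀ x * indC (R.dilate c) x) +
    ∫ x, φ₀ x * ∫ y, ∫ z,
      if y ∈ (R.dilate c).set ∧ z ∈ (R.dilate c).set then 0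
      else adj2 K x y z - adj2 K R.center y z

/-- `B` is an admissible `BMO` bound for `T_ε(1,1)`: `|⟨T_ε(1,1), φ₀⟩| ≤ B |R|`
over all admissible testing data. -/
def BMOBound {n : ℕ} (K : E n → E n → E n → ℂ) (ε : ℝ) (B : ℝ) : Prop :=
  ∀ (R : Cube n) (φ₀ : E n → ℂ), Measurable φ₀ → Function.support φ₀ ⊆ R.clSet →
    (∀ x, ‖φ₀ x‖ ≤ 1) → (∫ x, φ₀ x) = 0 →
    ∀ c : ℝ, 3 ≤ c → ε < 2⁻¹ * (c - 1) * R.side →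
      ‖bmoPairing K ε φ₀ R c‖ ≤ B * R.vol

/-- `B` is an admissible `BMO` bound for `T_ε^{1*}(1,1)`. -/
def BMOBound1 {n : ℕ} (K : E n → E n → E n → ℂ) (ε : ℝ) (B : ℝ) : Prop :=
  ∀ (R : Cube n) (φ₀ : E n → ℂ), Measurable φ₀ → Function.support φ₀ ⊆ R.clSet →
    (∀ x, ‖φ₀ x‖ ≤ 1) → (∫ x, φ₀ x) = 0 →
    ∀ c : ℝ, 3 ≤ c → ε < 2⁻¹ * (c - 1) * R.side →
      ‖bmoPairing1 K ε φ₀ R c‖ ≤ B * R.vol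

/-- `B` is an admissible `BMO` bound for `T_ε^{2*}(1,1)`. -/
def BMOBound2 {n : ℕ} (K : E n → E n → E n → ℂ) (ε : ℝ) (B : ℝ) : Prop :=
  ∀ (R : Cube n) (φ₀ : E n → ℂ), Measurable φ₀ → Function.support φ₀ ⊆ R.clSet →
    (∀ x, ‖φ₀ x‖ ≤ 1) → (∫ x, φ₀ x) = 0 →
    ∀ c : ℝ, 3 ≤ c → ε < 2⁻¹ * (c - 1) * R.side →
      ‖bmoPairing2 K ε φ₀ R c‖ ≤ B * R.vol

/-! ### Sparse collections -/

/-- A collection `𝒮` of cubes is `η`-sparse: every `Q ∈ 𝒮` carries a major measurable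
subset `E_Q ⊆ Q` with `|E_Q| > η |Q|`, the sets `E_Q` being pairwise disjoint. -/
def IsSparse {n : ℕ} (η : ℝ) (𝒮 : Set (Cube n)) : Prop :=
  ∃ Esel : Cube n → Set (E n),
    (∀ Q ∈ 𝒮, MeasurableSet (Esel Q) ∧ Esel Q ⊆ Q.set ∧
      ENNReal.ofReal (η * Q.vol) < MeasureTheory.volume (Esel Q)) ∧
    𝒮.Pairwise fun Q R => Disjoint (Esel Q) (Esel R)

/-- The sparse form `Λ_𝒮(f₁,f₂,f₃) = Σ_{Q ∈ 𝒮} |Q| ⟨|f₁|⟩_Q ⟨|f₂|⟩_Q ⟨|f₃|⟩_Q`. -/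
def sparseForm {n : ℕ} (𝒮 : Set (Cube n)) (f₁ f₂ f₃ : E n → ℂ) : ℝ :=
  ∑' Q : 𝒮, (Q : Cube n).vol * avgAbs Q f₁ * avgAbs Q f₂ * avgAbs Q f₃

/-! ### Bilinear dyadic shifts and paraproducts, as trilinear forms -/

/-- A trilinear form on functions on `ℝⁿ`. -/
abbrev TriForm (n : ℕ) : Type := (E n → ℂ) → (E n → ℂ) → (E n → ℂ) → ℂ

/-- The index set of a bilinear dyadic shift of complexity `(i,j,k)` in the grid `𝒟`:
tuples of cubes `I, J, K ⊆ Q` of `𝒟` with `ℓ(I) = 2^{-i} ℓ(Q)`, `ℓ(J) = 2^{-j} ℓ(Q)`,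
`ℓ(K) = 2^{-k} ℓ(Q)`, together with Haar signatures, `h_K` being cancellative and at most
one of `h_I, h_J` being noncancellative. -/
structure ShiftIndex (n : ℕ) (𝒟 : Set (Cube n)) (i j k : ℕ) where
  Q : Cube n
  I : Cube n
  J : Cube n
  K : Cube n
  ηf : Fin n → Bool
  ηg : Fin n → Bool
  ηh : Fin n → Bool
  memQ : Q ∈ 𝒟
  memI : I ∈ 𝒟
  memJ : J ∈ 𝒟
  memK : K ∈ 𝒟
  subI : I.set ⊆ Q.set
  subJ : J.set ⊆ Q.set
  subK : K.set ⊆ Q.set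
  sideI : I.side = Q.side / 2 ^ i
  sideJ : J.side = Q.side / 2 ^ j
  sideK : K.side = Q.side / 2 ^ k
  cancel_h : ηh ≠ fun _ => false
  cancel_fg : ¬(ηf = (fun _ => false) ∧ ηg = (fun _ => false))

/-- `Λ` is (the trilinear form of) a cancellative bilinear dyadic shift of complexity
`(i,j,k)` in the grid `𝒟`: `Λ(f,g,h) = Σ α_{I,J,K,Q} ⟨f, h̃_I⟩ ⟨g, h̃_J⟩ ⟨h, h_K⟩`
with `|α_{I,J,K,Q}| ≤ |I|^{1/2} |J|^{1/2} |K|^{1/2} / |Q|²`. -/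
def IsShiftForm {n : ℕ} (𝒟 : Set (Cube n)) (i j k : ℕ) (Λ : TriForm n) : Prop :=
  ∃ α : ShiftIndex n 𝒟 i j k → ℂ,
    (∀ t, ‖α t‖ ≤ Real.sqrt (t.I.vol * t.J.vol * t.K.vol) / t.Q.vol ^ 2) ∧
    ∀ f g h, Λ f g h =
      ∑' t : ShiftIndex n 𝒟 i j k,
        α t * haarPairing f t.I t.ηf * haarPairing g t.J t.ηg * haarPairing h t.K t.ηh

/-- `Λ` is a cancellative bilinear shift of complexity `(i,i,k)` or `(i,i+1,k)` in `𝒟`,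
or an adjoint (`⟨S^{1*}(f,g),h⟩ = ⟨S(h,g),f⟩`, `⟨S^{2*}(f,g),h⟩ = ⟨S(f,h),g⟩`) of such. -/
def IsExtShiftForm {n : ℕ} (𝒟 : Set (Cube n)) (i k : ℕ) (Λ : TriForm n) : Prop :=
  ∃ Λ₀ : TriForm n, (IsShiftForm 𝒟 i i k Λ₀ ∨ IsShiftForm 𝒟 i (i + 1) k Λ₀) ∧
    ((∀ f g h, Λ f g h = Λ₀ f g h) ∨ (∀ f g h, Λ f g h = Λ₀ h g f) ∨
      (∀ f g h, Λ f g h = Λ₀ f h g))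

/-- The index set of a bilinear paraproduct in the grid `𝒟`: cubes `K ∈ 𝒟` with a
cancellative Haar signature. -/
structure ParaIndex (n : ℕ) (𝒟 : Set (Cube n)) where
  K : Cube n
  η : Fin n → Bool
  mem : K ∈ 𝒟
  cancel : η ≠ fun _ => false

/-- `Λ` is (the trilinear form of) a bilinear paraproduct
`Π_β(f,g) = Σ_K β_K ⟨f⟩_K ⟨g⟩_K h_K` in the grid `𝒟`, with coefficients satisfying the
Carleson normalization `Σ_{K ⊆ K₀} |β_K|² ≤ |K₀|` for all `K₀ ∈ 𝒟`. -/
def IsParaForm {n : ℕ} (𝒟 : Set (Cube n)) (Λ : TriForm n) : Prop :=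
  ∃ β : ParaIndex n 𝒟 → ℂ,
    (∀ K₀ ∈ 𝒟, (∑' t : {t : ParaIndex n 𝒟 // t.K.set ⊆ K₀.set},
        ((‖β t.1‖₊ : ℝ≥0∞) ^ 2)) ≤ ENNReal.ofReal K₀.vol) ∧
    ∀ f g h, Λ f g h =
      ∑' t : ParaIndex n 𝒟, β t * avg t.K f * avg t.K g * haarPairing h t.K t.η

/-! The smooth and the sharp truncation at scale `ε` have the same kernel where
`max(|x-y|,|x-z|) > ε`. On the complementary region, a box of measure `(2ε)^{2n}` in `(y,z)`,
both kernels are `≤ C_K (ε/2)^{-2n}`, because `φ` vanishes unless `|x-y|+|x-z| > ε/2`. Hence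
`|T_ε^φ(1_Q,1_Q) - T_ε(1_Q,1_Q)| ≤ 2·16ⁿ C_K` pointwise, so `T_ε^φ` inherits the weak boundedness
of `T_ε` up to `2·16ⁿ C_K`, and the triangle inequality in `ε₁, ε₂` concludes. -/

open Metric

section IndicatorBound

variable {α F : Type*} [MeasurableSpace α] [NormedAddCommGroup F]
  {μ : Measure α} {f : α → F} {s : Set α} {C : ℝ}

lemma integrable_of_norm_le_indicator (hf : AEStronglyMeasurable f μ) (hs : MeasurableSet s)
    (hμs : μ s ≠ ∞) (h : ∀ p, ‖f p‖ ≤ s.indicator (fun _ => C) p) : Integrable f μ :=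
  .mono' ((integrable_indicator_iff hs).2 (integrableOn_const hμs)) hf (ae_of_all _ h)

lemma norm_integral_le_of_norm_le_indicator [NormedSpace ℝ F] (hs : MeasurableSet s)
    (hμs : μ s ≠ ∞) (h : ∀ p, ‖f p‖ ≤ s.indicator (fun _ => C) p) : ‖∫ p, f p ∂μ‖ ≤ C * μ.real s := by
  calc ‖∫ p, f p ∂μ‖ ≤ ∫ p, s.indicator (fun _ => C) p ∂μ :=
        norm_integral_le_of_norm_le ((integrable_indicator_iff hs).2 (integrableOn_const hμs))
          (ae_of_all _ h)
    _ = C * μ.real s := by rw [integral_indicator_const C hs, smul_eq_mul, mul_comm]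

end IndicatorBound

variable {n : ℕ}

namespace Cube

lemma set_eq_pi (Q : Cube n) :
    Q.set = Set.univ.pi fun i => Set.Ico (Q.corner i) (Q.corner i + Q.side) := by
  ext x; simp [Cube.set, Set.mem_Ico]

lemma measurableSet_set (Q : Cube n) : MeasurableSet Q.set := by
  rw [set_eq_pi]; exact MeasurableSet.univ_pi fun _ => measurableSet_Ico

lemma vol_pos (Q : Cube n) : 0 < Q.vol := pow_pos Q.side_pos n

lemma volume_set (Q : Cube n) : volume Q.set = ENNReal.ofReal Q.vol := by
  rw [set_eq_pi, Real.volume_pi_Ico]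
  simp [vol, ENNReal.ofReal_pow Q.side_pos.le]

lemma volume_set_ne_top (Q : Cube n) : volume Q.set ≠ ∞ := by
  rw [volume_set]; exact ENNReal.ofReal_ne_top

lemma measureReal_set (Q : Cube n) : volume.real Q.set = Q.vol := by
  rw [measureReal_def, volume_set, ENNReal.toReal_ofReal (vol_pos Q).le]

lemma volume_set_prod_ne_top (Q : Cube n) : volume (Q.set ×ˢ Q.set) ≠ ∞ := by
  rw [Measure.volume_eq_prod, Measure.prod_prod]
  exact ENNReal.mul_ne_top Q.volume_set_ne_top Q.volume_set_ne_top

end Cube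

lemma measurable_indC (Q : Cube n) : Measurable (indC Q) :=
  Measurable.ite Q.measurableSet_set measurable_const measurable_const

lemma WBPBound.nonneg {T : (E n → ℂ) → (E n → ℂ) → E n → ℂ} {W : ℝ} (hW : WBPBound T W) :
    0 ≤ W := by
  have h := hW ⟨fun _ => 0, 1, one_pos⟩
  simp only [Cube.vol, one_pow, mul_one] at h
  exact (norm_nonneg _).trans h

section KernelOp

def kernelOp (L : E n → E n → E n → ℂ) (f g : E n → ℂ) (x : E n) : ℂ :=
  ∫ y, ∫ z, L x y z * f y * g z

variable {L L₁ L₂ : E n → E n → E n → ℂ} {M : ℝ} (Q : Cube n)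

lemma norm_kernel_mul_indC_le (hLM : ∀ x y z, ‖L x y z‖ ≤ M) (x y z : E n) :
    ‖L x y z * indC Q y * indC Q z‖ ≤ (Q.set ×ˢ Q.set).indicator (fun _ => M) (y, z) := by
  unfold indC
  by_cases hy : y ∈ Q.set <;> by_cases hz : z ∈ Q.set <;> simp [hy, hz, hLM x y z]

lemma integrable_kernel_mul_indC (hL : Measurable fun p : E n × E n × E n => L p.1 p.2.1 p.2.2)
    (hLM : ∀ x y z, ‖L x y z‖ ≤ M) (x : E n) :
    Integrable (fun p : E n × E n => L x p.1 p.2 * indC Q p.1 * indC Q p.2) :=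
  integrable_of_norm_le_indicator
    (((hL.comp measurable_prodMk_left).mul ((measurable_indC Q).comp measurable_fst)).mul
      ((measurable_indC Q).comp measurable_snd)).aestronglyMeasurable
    (Q.measurableSet_set.prod Q.measurableSet_set) Q.volume_set_prod_ne_top
    fun p => norm_kernel_mul_indC_le Q hLM x p.1 p.2

lemma kernelOp_indC_eq_integral (hL : Measurable fun p : E n × E n × E n => L p.1 p.2.1 p.2.2)
    (hLM : ∀ x y z, ‖L x y z‖ ≤ M) (x : E n) :
    kernelOp L (indC Q) (indC Q) x = ∫ p : E n × E n, L x p.1 p.2 * indC Q p.1 * indC Q p.2 := by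
  rw [kernelOp, Measure.volume_eq_prod, integral_prod _ (integrable_kernel_mul_indC Q hL hLM x)]

lemma integrableOn_kernelOp_indC (hL : Measurable fun p : E n × E n × E n => L p.1 p.2.1 p.2.2)
    (hLM : ∀ x y z, ‖L x y z‖ ≤ M) {S : Set (E n)} (hS : volume S ≠ ∞) :
    IntegrableOn (kernelOp L (indC Q) (indC Q)) S := by
  have hmeas : StronglyMeasurable (kernelOp L (indC Q) (indC Q)) := by
    convert (((hL.mul ((measurable_indC Q).comp measurable_snd.fst)).mul
      ((measurable_indC Q).comp measurable_snd.snd)).stronglyMeasurable.integral_prod_right'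
        (ν := (volume : Measure (E n × E n)))) using 1
    funext x
    exact kernelOp_indC_eq_integral Q hL hLM x
  refine Measure.integrableOn_of_bounded (M := M * volume.real (Q.set ×ˢ Q.set)) hS
    hmeas.aestronglyMeasurable (ae_of_all _ fun x => ?_)
  rw [kernelOp_indC_eq_integral Q hL hLM x]
  exact norm_integral_le_of_norm_le_indicator (Q.measurableSet_set.prod Q.measurableSet_set)
    Q.volume_set_prod_ne_top fun p => norm_kernel_mul_indC_le Q hLM x p.1 p.2

lemma norm_kernelOp_indC_sub_le
    (hL₁ : Measurable fun p : E n × E n × E n => L₁ p.1 p.2.1 p.2.2)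
    (hL₂ : Measurable fun p : E n × E n × E n => L₂ p.1 p.2.1 p.2.2)
    (hM₁ : ∀ x y z, ‖L₁ x y z‖ ≤ M) (hM₂ : ∀ x y z, ‖L₂ x y z‖ ≤ M) {r : ℝ} (hr : 0 ≤ r)
    (hL : ∀ x y z, r < max (dist x y) (dist x z) → L₁ x y z = L₂ x y z) (x : E n) :
    ‖kernelOp L₁ (indC Q) (indC Q) x - kernelOp L₂ (indC Q) (indC Q) x‖ ≤
      2 * M * (2 * r) ^ (2 * n) := by
  set B := closedBall x r ×ˢ closedBall x r
  have hB : MeasurableSet B := measurableSet_closedBall.prod measurableSet_closedBall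
  have hBvol : volume B = ENNReal.ofReal ((2 * r) ^ (2 * n)) := by
    rw [Measure.volume_eq_prod, Measure.prod_prod, Real.volume_pi_closedBall x hr,
      Fintype.card_fin, ← ENNReal.ofReal_mul (by positivity), ← pow_add, ← two_mul]
  have hM : 0 ≤ M := (norm_nonneg _).trans (hM₁ x x x)
  have hpt : ∀ p : E n × E n, ‖L₁ x p.1 p.2 * indC Q p.1 * indC Q p.2 -
      L₂ x p.1 p.2 * indC Q p.1 * indC Q p.2‖ ≤ B.indicator (fun _ => 2 * M) p := by
    intro p
    by_cases hp : p ∈ B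
    · rw [indicator_of_mem hp, two_mul]
      refine (norm_sub_le _ _).trans (add_le_add ?_ ?_) <;>
        refine (norm_kernel_mul_indC_le Q ‹_› x p.1 p.2).trans
          (indicator_le_self' (fun _ _ => hM) _)
    · have hfar : r < max (dist x p.1) (dist x p.2) := by
        simp only [B, mem_prod, mem_closedBall, not_and_or, not_le] at hp
        rwa [lt_max_iff, dist_comm x, dist_comm x]
      rw [indicator_of_notMem hp, hL x p.1 p.2 hfar, sub_self, norm_zero]
  rw [kernelOp_indC_eq_integral Q hL₁ hM₁, kernelOp_indC_eq_integral Q hL₂ hM₂,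
    ← integral_sub (integrable_kernel_mul_indC Q hL₁ hM₁ x)
      (integrable_kernel_mul_indC Q hL₂ hM₂ x)]
  calc _ ≤ 2 * M * volume.real B :=
        norm_integral_le_of_norm_le_indicator hB (by rw [hBvol]; exact ENNReal.ofReal_ne_top) hpt
    _ = 2 * M * (2 * r) ^ (2 * n) := by
        rw [measureReal_def, hBvol, ENNReal.toReal_ofReal (by positivity)]

end KernelOp

def truncK (K : E n → E n → E n → ℂ) (ε : ℝ) : E n → E n → E n → ℂ :=
  fun x y z => if ε < max (dist x y) (dist x z) then K x y z else 0

lemma truncT_eq_kernelOp (K : E n → E n → E n → ℂ) (ε : ℝ) :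
    truncT K ε = kernelOp (truncK K ε) := by
  ext f g x
  simp only [truncT, kernelOp, truncK, ite_mul, zero_mul]

variable {α CK : ℝ} {K : E n → E n → E n → ℂ} {φ : ℝ → ℝ} {ε : ℝ}

namespace CZBounds

lemma nonneg (hK : CZBounds n α K CK) (hn : 0 < n) : 0 ≤ CK := by
  have h01 : (0 : E n) ≠ 1 := fun h => zero_ne_one (congrFun h ⟨0, hn⟩)
  have hpos : 0 < (dist (0 : E n) 1 + dist (0 : E n) 1) ^ (2 * n) := by
    have := dist_pos.2 h01
    positivity
  have h := (norm_nonneg _).trans (hK.2.1 0 1 1 fun h => h01 h.1)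
  simpa using (le_div_iff₀ hpos).1 h

lemma norm_le_of_lt (hK : CZBounds n α K CK) (hCK : 0 ≤ CK) {r : ℝ} (hr : 0 < r) {x y z : E n}
    (h : r < dist x y + dist x z) : ‖K x y z‖ ≤ CK / r ^ (2 * n) := by
  have hs : 0 < dist x y + dist x z := hr.trans h
  have hxyz : ¬(x = y ∧ y = z) := by
    rintro ⟨rfl, rfl⟩
    simp at hs
  exact (hK.2.1 x y z hxyz).trans
    (div_le_div_of_nonneg_left hCK (by positivity) (pow_le_pow_left₀ hr.le h.le _))

lemma norm_smoothK_le (hK : CZBounds n α K CK) (hCK : 0 ≤ CK) (hφ : memA φ) (hε : 0 < ε)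
    (x y z : E n) : ‖smoothK K φ ε x y z‖ ≤ CK / (ε / 2) ^ (2 * n) := by
  obtain ⟨-, hφ01, hφ0, -, -⟩ := hφ
  set t := (dist x y + dist x z) / ε
  rw [smoothK, norm_mul, Complex.norm_real, Real.norm_eq_abs, abs_of_nonneg (hφ01 t).1]
  by_cases ht : t ≤ 1 / 2
  · rw [hφ0 t ht, mul_zero]
    positivity
  · have hfar : ε / 2 < dist x y + dist x z := by
      rw [not_le, lt_div_iff₀ hε] at ht
      linarith
    exact (mul_le_of_le_one_right (norm_nonneg _) (hφ01 t).2).trans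
      (hK.norm_le_of_lt hCK (half_pos hε) hfar)

lemma norm_truncK_le (hK : CZBounds n α K CK) (hCK : 0 ≤ CK) (hε : 0 < ε) (x y z : E n) :
    ‖truncK K ε x y z‖ ≤ CK / (ε / 2) ^ (2 * n) := by
  unfold truncK
  split_ifs with h
  · exact hK.norm_le_of_lt hCK (half_pos hε)
      ((half_lt_self hε).trans (h.trans_le (max_le_add_of_nonneg dist_nonneg dist_nonneg)))
  · rw [norm_zero]
    positivity

lemma measurable_smoothK (hK : CZBounds n α K CK) (hφ : memA φ) :
    Measurable fun p : E n × E n × E n => smoothK K φ ε p.1 p.2.1 p.2.2 := by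
  have hφc := hφ.1.continuous
  exact hK.1.mul (by fun_prop : Continuous fun p : E n × E n × E n =>
    ((φ ((dist p.1 p.2.1 + dist p.1 p.2.2) / ε) : ℝ) : ℂ)).measurable

lemma measurable_truncK (hK : CZBounds n α K CK) :
    Measurable fun p : E n × E n × E n => truncK K ε p.1 p.2.1 p.2.2 :=
  Measurable.ite (measurableSet_lt measurable_const
    (by fun_prop : Continuous fun p : E n × E n × E n =>
      max (dist p.1 p.2.1) (dist p.1 p.2.2)).measurable) hK.1 measurable_const

end CZBounds

lemma smoothK_eq_truncK (hφ : memA φ) (hε : 0 < ε) {x y z : E n}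
    (h : ε < max (dist x y) (dist x z)) : smoothK K φ ε x y z = truncK K ε x y z := by
  have ht : 1 ≤ (dist x y + dist x z) / ε := by
    rw [le_div_iff₀ hε, one_mul]
    exact (h.trans_le (max_le_add_of_nonneg dist_nonneg dist_nonneg)).le
  simp [smoothK, truncK, h, hφ.2.2.2.1 _ ht]

lemma integrableOn_smoothT_indC (hK : CZBounds n α K CK) (hCK : 0 ≤ CK) (hφ : memA φ)
    (hε : 0 < ε) (Q : Cube n) : IntegrableOn (smoothT K φ ε (indC Q) (indC Q)) Q.set :=
  integrableOn_kernelOp_indC Q (hK.measurable_smoothK hφ) (hK.norm_smoothK_le hCK hφ hε)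
    Q.volume_set_ne_top

lemma norm_setIntegral_smoothT_indC_le (hK : CZBounds n α K CK) (hCK : 0 ≤ CK) (hφ : memA φ)
    (hε : 0 < ε) {W : ℝ} (hW : WBPBound (truncT K ε) W) (Q : Cube n) :
    ‖∫ x in Q.set, smoothT K φ ε (indC Q) (indC Q) x‖ ≤ (2 * 16 ^ n * CK + W) * Q.vol := by
  have hS := hK.norm_smoothK_le hCK hφ hε
  have hT := hK.norm_truncK_le hCK hε
  have hTint : IntegrableOn (truncT K ε (indC Q) (indC Q)) Q.set := by
    rw [truncT_eq_kernelOp]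
    exact integrableOn_kernelOp_indC Q hK.measurable_truncK hT Q.volume_set_ne_top
  have hdiff : ∀ x ∈ Q.set,
      ‖smoothT K φ ε (indC Q) (indC Q) x - truncT K ε (indC Q) (indC Q) x‖ ≤ 2 * 16 ^ n * CK := by
    intro x _
    rw [truncT_eq_kernelOp]
    calc _ ≤ 2 * (CK / (ε / 2) ^ (2 * n)) * (2 * ε) ^ (2 * n) :=
          norm_kernelOp_indC_sub_le Q (hK.measurable_smoothK hφ) hK.measurable_truncK hS hT
            hε.le (fun _ _ _ h => smoothK_eq_truncK hφ hε h) x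
      _ = 2 * 16 ^ n * CK := by
          field_simp
          rw [pow_mul, pow_mul, mul_assoc, ← mul_pow]
          congr 2
          ring
  have hSint := integrableOn_smoothT_indC hK hCK hφ hε Q
  set S := smoothT K φ ε (indC Q) (indC Q)
  set T := truncT K ε (indC Q) (indC Q)
  calc ‖∫ x in Q.set, S x‖ = ‖(∫ x in Q.set, S x - T x) + ∫ x in Q.set, T x‖ := by
        rw [integral_sub hSint hTint, sub_add_cancel]
    _ ≤ 2 * 16 ^ n * CK * Q.vol + W * Q.vol := by
        refine (norm_add_le _ _).trans (add_le_add ?_ (hW Q))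
        simpa only [Q.measureReal_set] using
          norm_setIntegral_le_of_norm_le_const Q.volume_set_ne_top.lt_top hdiff
    _ = (2 * 16 ^ n * CK + W) * Q.vol := by ring

/-- weak boundedness of the smoothly truncated difference:
`‖T^φ_{ε₁,ε₂}‖_WBP ≤ C(n) (‖K‖_{CZ_α} + ‖T_{ε₁}‖_WBP + ‖T_{ε₂}‖_WBP)`. -/
theorem wbp_of_smooth_truncation_difference (n : ℕ) (hn : 0 < n) :
    ∃ C : ℝ, 0 < C ∧
      ∀ α : ℝ, α ∈ Set.Ioc (0 : ℝ) 1 →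
      ∀ (K : E n → E n → E n → ℂ) (CK : ℝ), CZBounds n α K CK →
      ∀ φ : ℝ → ℝ, memA φ →
      ∀ ε₁ ε₂ : ℝ, 0 < ε₁ → ε₁ < ε₂ →
      ∀ W₁ W₂ : ℝ, WBPBound (truncT K ε₁) W₁ → WBPBound (truncT K ε₂) W₂ →
        WBPBound (fun f g x => smoothT K φ ε₁ f g x - smoothT K φ ε₂ f g x)
          (C * (CK + W₁ + W₂)) := by
  refine ⟨4 * 16 ^ n, by positivity, ?_⟩
  intro α _ K CK hK φ hφ ε₁ ε₂ hε₁ hε₁₂ W₁ W₂ hW₁ hW₂ Q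
  have hCK := hK.nonneg hn
  have h₁ := norm_setIntegral_smoothT_indC_le hK hCK hφ hε₁ hW₁ Q
  have h₂ := norm_setIntegral_smoothT_indC_le hK hCK hφ (hε₁.trans hε₁₂) hW₂ Q
  have h16 : (1 : ℝ) ≤ 16 ^ n := one_le_pow₀ (by norm_num)
  calc ‖∫ x in Q.set, (smoothT K φ ε₁ (indC Q) (indC Q) x - smoothT K φ ε₂ (indC Q) (indC Q) x)‖
      = ‖(∫ x in Q.set, smoothT K φ ε₁ (indC Q) (indC Q) x) -
          ∫ x in Q.set, smoothT K φ ε₂ (indC Q) (indC Q) x‖ := by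
        rw [integral_sub (integrableOn_smoothT_indC hK hCK hφ hε₁ Q)
          (integrableOn_smoothT_indC hK hCK hφ (hε₁.trans hε₁₂) Q)]
    _ ≤ (2 * 16 ^ n * CK + W₁) * Q.vol + (2 * 16 ^ n * CK + W₂) * Q.vol :=
        (norm_sub_le _ _).trans (add_le_add h₁ h₂)
    _ ≤ 4 * 16 ^ n * (CK + W₁ + W₂) * Q.vol := by
        rw [← add_mul]
        exact mul_le_mul_of_nonneg_right (by nlinarith [hW₁.nonneg, hW₂.nonneg]) Q.vol_pos.le

end Bilinear
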